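/- Let n be a natural number, f : ℝⁿ → ℝ convex and differentiable with L-Lipschitz gradient (L > 0), β ≥ 0, and 0 < γ ≤ 1/L. Set F(w) = f(w) + β·∑ᵢ|wᵢ|. Then for every w ∈ ℝⁿ, the ISTA update w⁺ = S_{βγ}(w − γ∇f(w)) (soft-thresholding applied coordinatewise) satisfies F(w⁺) ≤ F(w). -/

import Mathlib

/-!
Two inequalities are combined. A gradient that is `L`-Lipschitz gives the quadratic upper
bound `f y ≤ f x + ⟪∇f x, y - x⟫ + L/2 ‖y - x‖²`. Soft-thresholding is the proximal map of
`a |·|`, which gives the variational inequality `(t - S_a t)(v - S_a t) ≤ a (|v| - |S_a t|)`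
coordinatewise. For `p = S(w - γ∇f w)` the second inequality, summed and tested at `v = w`, gives
`‖p - w‖² + γ⟪∇f w, p - w⟫ ≤ βγ (‖w‖₁ - ‖p‖₁)`. Inserting this into the first bound leaves
`F p ≤ F w - (1/γ - L/2) ‖p - w‖²`, and `γ ≤ 1/L` makes the last term nonpositive.
-/

open RealInnerProductSpace

section Descent

variable {E : Type*} [NormedAddCommGroup E] [InnerProductSpace ℝ E] [CompleteSpace E]

theorem HasGradientAt.hasDerivAt_comp_add_smul {f : E → ℝ} {g x v : E} {t : ℝ}
    (h : HasGradientAt f g (x + t • v)) :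
    HasDerivAt (fun s : ℝ => f (x + s • v)) ⟪g, v⟫ t := by
  have hline : HasDerivAt (fun s : ℝ => x + s • v) v t := by
    simpa using ((hasDerivAt_id t).smul_const v).const_add x
  simpa [Function.comp_def] using h.hasFDerivAt.comp_hasDerivAt t hline

theorem le_add_inner_gradient_add_sq_of_lipschitz {f : E → ℝ} (hf : Differentiable ℝ f) {L : ℝ}
    (hlip : ∀ x y : E, ‖gradient f y - gradient f x‖ ≤ L * ‖y - x‖) (x y : E) :
    f y ≤ f x + ⟪gradient f x, y - x⟫ + L / 2 * ‖y - x‖ ^ 2 := by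
  set v := y - x
  set ψ : ℝ → ℝ := fun t => f (x + t • v) - t * ⟪gradient f x, v⟫ - L / 2 * t ^ 2 * ‖v‖ ^ 2
  have hψ : ∀ t, HasDerivAt ψ
      (⟪gradient f (x + t • v) - gradient f x, v⟫ - L * t * ‖v‖ ^ 2) t := fun t => by
    have := ((((hf (x + t • v)).hasGradientAt.hasDerivAt_comp_add_smul (x := x) (v := v))).sub
      ((hasDerivAt_id t).mul_const ⟪gradient f x, v⟫)).sub
      (((hasDerivAt_pow 2 t).const_mul (L / 2)).mul_const (‖v‖ ^ 2))
    refine this.congr_deriv ?_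
    simp only [inner_sub_left, Nat.cast_ofNat, Nat.add_one_sub_one, pow_one]; ring
  have hψ_nonpos : ∀ t ∈ interior (Set.Ici (0 : ℝ)),
      ⟪gradient f (x + t • v) - gradient f x, v⟫ - L * t * ‖v‖ ^ 2 ≤ 0 := by
    intro t ht
    rw [interior_Ici, Set.mem_Ioi] at ht
    have hdist : ‖x + t • v - x‖ = t * ‖v‖ := by
      simp [norm_smul, abs_of_pos ht]
    rw [sub_nonpos]
    calc ⟪gradient f (x + t • v) - gradient f x, v⟫
        ≤ ‖gradient f (x + t • v) - gradient f x‖ * ‖v‖ := real_inner_le_norm _ _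
      _ ≤ L * (t * ‖v‖) * ‖v‖ := by
          gcongr; rw [← hdist]; exact hlip _ _
      _ = L * t * ‖v‖ ^ 2 := by ring
  have hanti : AntitoneOn ψ (Set.Ici 0) :=
    antitoneOn_of_hasDerivWithinAt_nonpos (convex_Ici 0)
      (fun t _ => (hψ t).continuousAt.continuousWithinAt)
      (fun t _ => (hψ t).hasDerivWithinAt) hψ_nonpos
  have h01 : ψ 1 ≤ ψ 0 := hanti Set.self_mem_Ici (Set.mem_Ici.mpr zero_le_one) zero_le_one
  simp only [ψ, v, one_smul, zero_smul, add_zero, add_sub_cancel, one_mul, zero_mul,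
    one_pow, mul_one, sub_zero, zero_pow two_ne_zero, mul_zero] at h01
  linarith

end Descent

noncomputable def softThreshold (a t : ℝ) : ℝ := Real.sign t * max (|t| - a) 0

theorem sub_softThreshold_mul_sub_le {a : ℝ} (ha : 0 ≤ a) (t v : ℝ) :
    (t - softThreshold a t) * (v - softThreshold a t) ≤ a * (|v| - |softThreshold a t|) := by
  unfold softThreshold
  rcases le_or_gt |t| a with hsmall | hlarge
  · rw [max_eq_right (by linarith), mul_zero, sub_zero, sub_zero, abs_zero, sub_zero]
    calc t * v ≤ |t| * |v| := by rw [← abs_mul]; exact le_abs_self _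
      _ ≤ a * |v| := by gcongr
  · rw [max_eq_left (by linarith)]
    rcases lt_trichotomy t 0 with hneg | hzero | hpos
    · rw [abs_of_neg hneg] at hlarge ⊢
      rw [Real.sign_of_neg hneg, abs_of_neg (by linarith : -1 * (-t - a) < 0)]
      nlinarith [neg_abs_le v]
    · rw [hzero, abs_zero] at hlarge; linarith
    · rw [abs_of_pos hpos] at hlarge ⊢
      rw [Real.sign_of_pos hpos, abs_of_pos (by linarith : 1 * (t - a) > 0)]
      nlinarith [le_abs_self v]

theorem inner_sub_softThreshold_le {ι : Type*} [Fintype ι] {a : ℝ} (ha : 0 ≤ a)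
    {u w p : EuclideanSpace ℝ ι} (hp : ∀ i, p i = softThreshold a (u i)) :
    ⟪u - p, w - p⟫ ≤ a * (∑ i, |w i| - ∑ i, |p i|) := by
  rw [PiLp.inner_apply, ← Finset.sum_sub_distrib, Finset.mul_sum]
  refine Finset.sum_le_sum fun i _ => ?_
  simp only [PiLp.sub_apply, Real.inner_apply, hp]
  exact sub_softThreshold_mul_sub_le ha _ _

theorem ista_step_decreases_general
    (n : ℕ) (f : EuclideanSpace ℝ (Fin n) → ℝ)
    (hdiff : Differentiable ℝ f)
    (L : ℝ) (hL : 0 < L)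
    (hlip : ∀ w₁ w₂ : EuclideanSpace ℝ (Fin n),
        ‖gradient f w₂ - gradient f w₁‖ ≤ L * ‖w₂ - w₁‖)
    (β γ : ℝ) (hβ : 0 ≤ β) (hγ : 0 < γ) (hγL : γ ≤ 1 / L)
    (S : EuclideanSpace ℝ (Fin n) → EuclideanSpace ℝ (Fin n))
    (hS : ∀ (u : EuclideanSpace ℝ (Fin n)) (i : Fin n),
        S u i = Real.sign (u i) * max (|u i| - β * γ) 0) :
    ∀ w : EuclideanSpace ℝ (Fin n),
      f (S (w - γ • gradient f w)) + β * ∑ i, |S (w - γ • gradient f w) i|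
        ≤ f w + β * ∑ i, |w i| := by
  intro w
  set g := gradient f w
  set p := S (w - γ • g)
  have hprox : ⟪w - γ • g - p, w - p⟫ ≤ β * γ * (∑ i, |w i| - ∑ i, |p i|) :=
    inner_sub_softThreshold_le (mul_nonneg hβ hγ.le) (hS _)
  have hexpand : ⟪w - γ • g - p, w - p⟫ = ‖p - w‖ ^ 2 + γ * ⟪g, p - w⟫ := by
    rw [sub_right_comm, inner_sub_left, real_inner_self_eq_norm_sq, real_inner_smul_left,
      norm_sub_rev, ← neg_sub p w, inner_neg_right]
    ring
  rw [hexpand] at hprox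
  have hdesc : f p ≤ f w + ⟪g, p - w⟫ + L / 2 * ‖p - w‖ ^ 2 :=
    le_add_inner_gradient_add_sq_of_lipschitz hdiff hlip w p
  have hLγ : L * γ ≤ 1 := by rwa [le_div_iff₀ hL, mul_comm] at hγL
  refine le_of_mul_le_mul_left ?_ hγ
  nlinarith [mul_le_mul_of_nonneg_left hdesc hγ.le, sq_nonneg ‖p - w‖]

/-- Monotone decrease of ISTA: if `f` is convex and differentiable with `L`-Lipschitz
gradient, `β ≥ 0` and `0 < γ ≤ 1/L`, then one ISTA update
`w⁺ = S_{βγ}(w − γ∇f(w))` does not increase `F = f + β‖·‖₁`. -/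
theorem ista_step_decreases
    (n : ℕ) (f : EuclideanSpace ℝ (Fin n) → ℝ)
    (hconv : ConvexOn ℝ Set.univ f) (hdiff : Differentiable ℝ f)
    (L : ℝ) (hL : 0 < L)
    (hlip : ∀ w₁ w₂ : EuclideanSpace ℝ (Fin n),
        ‖gradient f w₂ - gradient f w₁‖ ≤ L * ‖w₂ - w₁‖)
    (β γ : ℝ) (hβ : 0 ≤ β) (hγ : 0 < γ) (hγL : γ ≤ 1 / L)
    (S : EuclideanSpace ℝ (Fin n) → EuclideanSpace ℝ (Fin n))
    (hS : ∀ (u : EuclideanSpace ℝ (Fin n)) (i : Fin n),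
        S u i = Real.sign (u i) * max (|u i| - β * γ) 0) :
    ∀ w : EuclideanSpace ℝ (Fin n),
      f (S (w - γ • gradient f w)) + β * ∑ i, |S (w - γ • gradient f w) i|
        ≤ f w + β * ∑ i, |w i| :=
  ista_step_decreases_general n f hdiff L hL hlip β γ hβ hγ hγL S hS
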